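/- arXiv:1210.7714 — 3 statements merged into one kernel-verified Lean document; each statement's English description precedes it below -/
import Mathlib

section
/- Let n > 0 be a real number, k a positive integer, and let μ₁ ≤ μ₂ ≤ ⋯ ≤ μ_{k+1} be positive real numbers such that for every integer j with 1 ≤ j ≤ k one has ∑_{i=1}^{j} (μ_{j+1} − μᵢ)² ≤ (4/n) ∑_{i=1}^{j} μᵢ (μ_{j+1} − μᵢ). Then μ_{k+1} ≤ (1 + 4/n) · k^{2/n} · μ₁. -/
/-!
Put `a = 2 / n`, `S_j = ∑_{i ≤ j} μ_i` and `Q_j = ∑_{i ≤ j} μ_i²`. The hypothesis at `j` says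
that `Λ = μ_{j+1}` satisfies `j Λ² - 2 (1 + a) S_j Λ + (1 + 2a) Q_j ≤ 0`. The quantity
`F_j = (1 + a) (S_j / j)² - Q_j / j` then satisfies `F_{j+1} ≤ w² F_j` with `w = ((j + 1) / j)^a`:
eliminating `Q_j` by means of the constraint leaves a binary quadratic form in `S_j` and `Λ`
which is positive semidefinite as soon as `(1 + 2a) w + j ≤ (j + 1) w²`, and this last
inequality is `c sinh b ≤ sinh (c b)` for `c = 1 + 2a ≥ 1`, i.e. convexity of `sinh` on `[0, ∞)`.
Hence `F_k ≤ k^{2a} F_1 = a k^{2a} μ_1²`, while the constraint at `k` gives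
`a μ_{k+1}² ≤ (1 + 2a)² F_k`.
-/

open Finset Real

theorem Real.convexOn_sinh : ConvexOn ℝ (Set.Ici 0) sinh := by
  refine MonotoneOn.convexOn_of_deriv (convex_Ici 0) continuous_sinh.continuousOn
    differentiable_sinh.differentiableOn ?_
  rw [deriv_sinh, interior_Ici]
  intro x hx y hy hxy
  rwa [cosh_le_cosh, abs_of_pos hx, abs_of_pos hy]

theorem Real.mul_sinh_le_sinh_mul {b c : ℝ} (hb : 0 ≤ b) (hc : 1 ≤ c) :
    c * sinh b ≤ sinh (c * b) := by
  have hc₀ : 0 < c := by linarith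
  have h := convexOn_sinh.2 (Set.mem_Ici.2 (mul_nonneg hc₀.le hb)) (Set.mem_Ici.2 le_rfl)
    (inv_nonneg.2 hc₀.le) (sub_nonneg.2 (inv_le_one_of_one_le₀ hc)) (add_sub_cancel _ _)
  simp only [smul_eq_mul, mul_zero, add_zero, inv_mul_cancel_left₀ hc₀.ne', sinh_zero] at h
  calc c * sinh b ≤ c * (c⁻¹ * sinh (c * b)) := mul_le_mul_of_nonneg_left h hc₀.le
    _ = sinh (c * b) := mul_inv_cancel_left₀ hc₀.ne' _

theorem Real.mul_sub_one_mul_rpow_le {x a : ℝ} (hx : 1 ≤ x) (ha : 0 ≤ a) :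
    (1 + 2 * a) * (x - 1) * x ^ a ≤ x * (x ^ a) ^ 2 - 1 := by
  -- with `x = exp (2 t)` this is `(1 + 2a) sinh t ≤ sinh ((1 + 2a) t)` times `2 exp ((1 + 2a) t)`
  have hx₀ : 0 < x := by linarith
  set t := log x / 2
  have h := mul_sinh_le_sinh_mul (div_nonneg (log_nonneg hx) two_pos.le)
    (by linarith : 1 ≤ 1 + 2 * a)
  have hp : exp t ^ 2 = x := by rw [← exp_nat_mul]; simp [t, mul_div_cancel₀, exp_log hx₀]
  have hq : x ^ a = exp (2 * a * t) := by rw [rpow_def_of_pos hx₀]; congr 1; ring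
  rw [sinh_eq, sinh_eq, show (1 + 2 * a) * t = t + 2 * a * t by ring, exp_add, neg_add, exp_add,
    exp_neg, exp_neg] at h
  rw [hq, ← hp]
  have hp₀ := exp_pos t
  have hq₀ := exp_pos (2 * a * t)
  field_simp at h
  nlinarith [h]

theorem quadratic_form_nonneg {A B C x y : ℝ} (hA : 0 < A) (h : B ^ 2 ≤ A * C) :
    0 ≤ A * x ^ 2 - 2 * B * x * y + C * y ^ 2 := by
  nlinarith [sq_nonneg (A * x - B * y), mul_nonneg (sub_nonneg.2 h) (sq_nonneg y)]

theorem Finset.quadratic_le_zero_of_sum_sq_sub_le {ι : Type*} (s : Finset ι) (f : ι → ℝ)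
    (c a : ℝ)
    (h : ∑ i ∈ s, (c - f i) ^ 2 ≤ 2 * a * ∑ i ∈ s, f i * (c - f i)) :
    #s * c ^ 2 - 2 * (1 + a) * (∑ i ∈ s, f i) * c + (1 + 2 * a) * ∑ i ∈ s, f i ^ 2 ≤ 0 := by
  simp only [sub_sq, mul_sub, sum_add_distrib, sum_sub_distrib, ← sum_mul, ← mul_sum, sum_const,
    nsmul_eq_mul, ← sq] at h
  nlinarith

noncomputable def chengYangGap (a j S Q : ℝ) : ℝ := (1 + a) * (S / j) ^ 2 - Q / j

section Gap

variable {a j S Q Λ : ℝ}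

theorem chengYangGap_succ_le {w : ℝ} (ha : 0 ≤ a) (hj : 0 < j) (hw : 0 ≤ w)
    (hwj : (1 + 2 * a) * w + j ≤ (j + 1) * w ^ 2)
    (hΛ : j * Λ ^ 2 - 2 * (1 + a) * S * Λ + (1 + 2 * a) * Q ≤ 0) :
    chengYangGap a (j + 1) (S + Λ) (Q + Λ ^ 2) ≤ w ^ 2 * chengYangGap a j S Q := by
  set s := 1 + 2 * a
  set u := (j + 1) * w ^ 2 - j
  have hsu : s * w ≤ u := by linarith
  have hu : 0 ≤ u := le_trans (by positivity) hsu
  set α := s * (1 + a) * ((j + 1) * u + j)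
  set β := (1 + a) * j * (s * j + (j + 1) * u)
  set γ := j ^ 2 * (s * (j - a) + (j + 1) * u)
  have hα : 0 < α := by positivity
  have hdisc : β ^ 2 ≤ α * γ := by
    have hid : α * γ - β ^ 2 =
        a * (1 + a) * j ^ 2 * (j + 1) ^ 2 * ((u - s * w) * (u + s * w)) := by
      simp only [α, β, γ, u, s]; ring
    have : 0 ≤ (u - s * w) * (u + s * w) := mul_nonneg (by linarith) (by positivity)
    nlinarith [mul_nonneg (by positivity : 0 ≤ a * (1 + a) * j ^ 2 * (j + 1) ^ 2) this]
  -- `Q` enters with the negative coefficient `-(j + 1) u`, so the constraint eliminates it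
  have key : s * j ^ 2 * (j + 1) ^ 2 *
      (w ^ 2 * chengYangGap a j S Q - chengYangGap a (j + 1) (S + Λ) (Q + Λ ^ 2)) =
      (j + 1) * u * -(j * (j * Λ ^ 2 - 2 * (1 + a) * S * Λ + s * Q)) +
        (α * S ^ 2 - 2 * β * S * Λ + γ * Λ ^ 2) := by
    simp only [chengYangGap, α, β, γ, u, s]
    field_simp
    ring
  have hkey : 0 ≤ s * j ^ 2 * (j + 1) ^ 2 *
      (w ^ 2 * chengYangGap a j S Q - chengYangGap a (j + 1) (S + Λ) (Q + Λ ^ 2)) := by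
    rw [key]
    exact add_nonneg (mul_nonneg (by positivity)
      (neg_nonneg.2 (mul_nonpos_of_nonneg_of_nonpos hj.le hΛ))) (quadratic_form_nonneg hα hdisc)
  linarith [nonneg_of_mul_nonneg_right hkey (by positivity)]

theorem mul_sq_le_chengYangGap (ha : 0 ≤ a) (hj : 0 < j)
    (hΛ : j * Λ ^ 2 - 2 * (1 + a) * S * Λ + (1 + 2 * a) * Q ≤ 0) :
    a * Λ ^ 2 ≤ (1 + 2 * a) ^ 2 * chengYangGap a j S Q := by
  obtain ⟨m, rfl⟩ : ∃ m, S = j * m := ⟨S / j, by field_simp⟩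
  obtain ⟨q, rfl⟩ : ∃ q, Q = j * q := ⟨Q / j, by field_simp⟩
  have h : Λ ^ 2 - 2 * (1 + a) * m * Λ + (1 + 2 * a) * q ≤ 0 := by nlinarith
  simp only [chengYangGap]
  field_simp
  nlinarith [sq_nonneg ((1 + 2 * a) * m - Λ)]

end Gap

def ChengYangCondition (a : ℝ) (μ : ℕ → ℝ) (j : ℕ) : Prop :=
  ∑ i ∈ Icc 1 j, (μ (j + 1) - μ i) ^ 2 ≤ 2 * a * ∑ i ∈ Icc 1 j, μ i * (μ (j + 1) - μ i)

noncomputable def chengYangF (a : ℝ) (μ : ℕ → ℝ) (j : ℕ) : ℝ :=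
  chengYangGap a j (∑ i ∈ Icc 1 j, μ i) (∑ i ∈ Icc 1 j, μ i ^ 2)

theorem chengYangF_one (a : ℝ) (μ : ℕ → ℝ) : chengYangF a μ 1 = a * μ 1 ^ 2 := by
  simp only [chengYangF, chengYangGap, Icc_self, sum_singleton, Nat.cast_one, div_one]
  ring

section Sequence

variable {a : ℝ} {μ : ℕ → ℝ}

theorem ChengYangCondition.quadratic_le_zero {j : ℕ} (h : ChengYangCondition a μ j) :
    j * μ (j + 1) ^ 2 - 2 * (1 + a) * (∑ i ∈ Icc 1 j, μ i) * μ (j + 1) +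
      (1 + 2 * a) * ∑ i ∈ Icc 1 j, μ i ^ 2 ≤ 0 := by
  simpa using quadratic_le_zero_of_sum_sq_sub_le _ _ _ _ h

theorem chengYangF_succ_le (ha : 0 ≤ a) {j : ℕ} (hj : 1 ≤ j) (h : ChengYangCondition a μ j) :
    chengYangF a μ (j + 1) ≤ ((((j : ℝ) + 1) / j) ^ a) ^ 2 * chengYangF a μ j := by
  have hj₀ : (0 : ℝ) < j := by exact_mod_cast hj
  have hw := mul_sub_one_mul_rpow_le (x := ((j : ℝ) + 1) / j)
    (by rw [le_div_iff₀ hj₀]; linarith) ha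
  have hwj : (1 + 2 * a) * (((j : ℝ) + 1) / j) ^ a + j ≤
      (j + 1) * ((((j : ℝ) + 1) / j) ^ a) ^ 2 := by
    have := mul_le_mul_of_nonneg_left hw hj₀.le
    field_simp at this
    linarith
  simp only [chengYangF, sum_Icc_succ_top (by omega : 1 ≤ j + 1)]
  push_cast
  exact chengYangGap_succ_le ha hj₀ (by positivity) hwj h.quadratic_le_zero

theorem chengYangF_le {k : ℕ} (ha : 0 ≤ a)
    (h : ∀ j, 1 ≤ j → j < k → ChengYangCondition a μ j) {j : ℕ} (hj : 1 ≤ j) (hjk : j ≤ k) :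
    chengYangF a μ j ≤ ((j : ℝ) ^ a) ^ 2 * chengYangF a μ 1 := by
  induction j, hj using Nat.le_induction with
  | base => simp
  | succ m hm ih =>
    have hm₀ : (0 : ℝ) < m := by exact_mod_cast hm
    calc chengYangF a μ (m + 1) ≤ ((((m : ℝ) + 1) / m) ^ a) ^ 2 * chengYangF a μ m :=
          chengYangF_succ_le ha hm (h m hm hjk)
      _ ≤ ((((m : ℝ) + 1) / m) ^ a) ^ 2 * (((m : ℝ) ^ a) ^ 2 * chengYangF a μ 1) :=
          mul_le_mul_of_nonneg_left (ih (by omega)) (by positivity)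
      _ = (((m + 1 : ℕ) : ℝ) ^ a) ^ 2 * chengYangF a μ 1 := by
          rw [div_rpow (by positivity) hm₀.le, ← mul_assoc, ← mul_pow,
            div_mul_cancel₀ _ (rpow_pos_of_pos hm₀ a).ne']
          push_cast; rfl

end Sequence

theorem chengYang_recursion_general (n : ℝ) (hn : 0 < n) (k : ℕ) (hk : 0 < k)
    (μ : ℕ → ℝ)
    (hpos : ∀ i, 1 ≤ i → i ≤ k + 1 → 0 < μ i)
    (hrec : ∀ j, 1 ≤ j → j ≤ k →
      ∑ i ∈ Finset.Icc 1 j, (μ (j + 1) - μ i) ^ 2 ≤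
        (4 / n) * ∑ i ∈ Finset.Icc 1 j, μ i * (μ (j + 1) - μ i)) :
    μ (k + 1) ≤ (1 + 4 / n) * (k : ℝ) ^ ((2 : ℝ) / n) * μ 1 := by
  set a := 2 / n
  have ha : 0 < a := by positivity
  rw [show 4 / n = 2 * a by ring] at hrec ⊢
  have hF := chengYangF_le ha.le (fun j hj hjk => hrec j hj hjk.le) hk le_rfl
  rw [chengYangF_one] at hF
  have hlast := mul_sq_le_chengYangGap ha.le (by exact_mod_cast hk)
    (ChengYangCondition.quadratic_le_zero (hrec k hk le_rfl))
  have hsq : μ (k + 1) ^ 2 ≤ ((1 + 2 * a) * (k : ℝ) ^ a * μ 1) ^ 2 := by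
    refine le_of_mul_le_mul_left ?_ ha
    calc a * μ (k + 1) ^ 2 ≤ (1 + 2 * a) ^ 2 * chengYangF a μ k := hlast
      _ ≤ (1 + 2 * a) ^ 2 * (((k : ℝ) ^ a) ^ 2 * (a * μ 1 ^ 2)) :=
          mul_le_mul_of_nonneg_left hF (by positivity)
      _ = a * ((1 + 2 * a) * (k : ℝ) ^ a * μ 1) ^ 2 := by ring
  have hμ₁ := hpos 1 le_rfl (by omega)
  exact le_of_sq_le_sq hsq (by positivity)

/-- **Cheng–Yang recursion formula.** If `0 < n` and `μ₁ ≤ ⋯ ≤ μ_{k+1}` are positive reals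
satisfying, for every `1 ≤ j ≤ k`,
`∑_{i=1}^{j} (μ_{j+1} − μᵢ)² ≤ (4/n) ∑_{i=1}^{j} μᵢ (μ_{j+1} − μᵢ)`,
then `μ_{k+1} ≤ (1 + 4/n) k^{2/n} μ₁`. -/
theorem chengYang_recursion (n : ℝ) (hn : 0 < n) (k : ℕ) (hk : 0 < k)
    (μ : ℕ → ℝ)
    (hpos : ∀ i, 1 ≤ i → i ≤ k + 1 → 0 < μ i)
    (hmono : ∀ i j, 1 ≤ i → i ≤ j → j ≤ k + 1 → μ i ≤ μ j)
    (hrec : ∀ j, 1 ≤ j → j ≤ k →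
      ∑ i ∈ Finset.Icc 1 j, (μ (j + 1) - μ i) ^ 2 ≤
        (4 / n) * ∑ i ∈ Finset.Icc 1 j, μ i * (μ (j + 1) - μ i)) :
    μ (k + 1) ≤ (1 + 4 / n) * (k : ℝ) ^ ((2 : ℝ) / n) * μ 1 :=
  chengYang_recursion_general n hn k hk μ hpos hrec
end

section
/- Let m be a positive integer and set c_m := 2m(m+1). Let (λ_i)_{i ≥ 1} be a nondecreasing sequence of nonnegative real numbers with λ₁ = 0, and suppose that for every positive integer j one has ∑_{i=1}^{j} (λ_{j+1} − λᵢ)² ≤ (2/m) ∑_{i=1}^{j} (λ_{j+1} − λᵢ)(λᵢ + c_m). Then for every positive integer k, λ_{k+1} ≤ 2(m+1)(m+2) · k^{1/m} − 2m(m+1). -/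
/-!
With `μᵢ = λᵢ + c_m` and `p = 1 / m` the hypothesis reads
`∑ (μ_{j+1} - μᵢ)² ≤ 2p ∑ (μ_{j+1} - μᵢ) μᵢ`, a quadratic inequality for `μ_{j+1}` whose
coefficients are the means `Λ_j` of the `μᵢ` and `T_j` of the `μᵢ²`. Cheng–Yang's quantity
`F_j = (1 + p) Λ_j² - T_j` then satisfies `F_{j+1} ≤ (1 + 1/j)^{2p} F_j`: with
`s = μ_{j+1} - (1 + p) Λ_j`, the difference `(j+1)² F_{j+1} - j(j+1) F_j` is a quadratic form
in `(Λ_j, s)`, bounded by its top eigenvalue times `(p + p²) Λ_j² + s² ≤ (1 + 2p) F_j`, and the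
remaining scalar inequality follows from `log (1 + 1/j) ≥ 2 / (2j + 1)` and a cubic Taylor bound
for `exp`. Hence `F_k ≤ k^{2p} F_1 = k^{2p} p μ₁²`, while by Cauchy–Schwarz the quadratic
inequality gives `p μ_{k+1}² ≤ (1 + 2p)² F_k`, i.e. `μ_{k+1} ≤ (1 + 2p) k^p c_m`.
-/

open Finset Real

namespace Real

theorem cubic_le_exp_of_nonneg {x : ℝ} (hx : 0 ≤ x) : 1 + x + x ^ 2 / 2 + x ^ 3 / 6 ≤ exp x := by
  have h := sum_le_exp_of_nonneg hx 4
  norm_num [sum_range_succ, Nat.factorial] at h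
  linarith

theorem two_div_two_mul_add_one_le_log_one_add_inv {a : ℝ} (ha : 0 < a) :
    2 / (2 * a + 1) ≤ log (1 + a⁻¹) := by
  have h := le_hasSum (hasSum_log_one_add_inv ha) 0 fun k _ => by positivity
  norm_num at h
  simpa [div_eq_mul_inv] using h

theorem exp_le_one_add_inv_rpow {a x : ℝ} (ha : 0 < a) (hx : 0 ≤ x) :
    exp (2 * x / (2 * a + 1)) ≤ (1 + a⁻¹) ^ x := by
  rw [rpow_def_of_pos (by positivity), exp_le_exp, mul_comm 2 x, mul_div_assoc, mul_comm (log _)]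
  exact mul_le_mul_of_nonneg_left (two_div_two_mul_add_one_le_log_one_add_inv ha) hx

theorem sqrt_sq_add_le {x d : ℝ} (hx : 0 < x) (hd : 0 ≤ d) :
    √(x ^ 2 + d) ≤ x + d / (2 * x) := by
  rw [sqrt_le_left (by positivity)]
  have : (x + d / (2 * x)) ^ 2 = x ^ 2 + d + (d / (2 * x)) ^ 2 := by
    field_simp
    ring
  nlinarith [sq_nonneg (d / (2 * x))]

end Real

namespace ChengYang

/-- The larger eigenvalue of the symmetric matrix `[[J + 1 + p, √q], [√q, p - J]]`,
`q = p + p²`: the form in `quadForm_le_topEigenvalue_mul` in the variables `(√q u, s)`. -/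
noncomputable def topEigenvalue (J p : ℝ) : ℝ :=
  (1 + 2 * p + √((2 * J + 1) ^ 2 + 4 * (p + p ^ 2))) / 2

theorem quadForm_le_topEigenvalue_mul {J p : ℝ} (hJ : 0 ≤ J) (hp : 0 ≤ p) (u s : ℝ) :
    (J + 1 + p) * (p + p ^ 2) * u ^ 2 + 2 * (p + p ^ 2) * u * s - (J - p) * s ^ 2 ≤
      topEigenvalue J p * ((p + p ^ 2) * u ^ 2 + s ^ 2) := by
  set q := p + p ^ 2
  set ρ := topEigenvalue J p
  set R := √((2 * J + 1) ^ 2 + 4 * q)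
  have hR : R ^ 2 = (2 * J + 1) ^ 2 + 4 * q := sq_sqrt (by positivity)
  have hRJ : 2 * J + 1 ≤ R := le_sqrt_of_sq_le (by nlinarith)
  have hgap : 0 < ρ + J - p := by simp only [ρ, topEigenvalue]; linarith
  -- the characteristic equation of the matrix at `ρ`
  have hprod : (ρ - (J + 1 + p)) * (ρ + J - p) = q := by
    simp only [ρ, topEigenvalue]; linear_combination hR / 4
  have key : (ρ + J - p) * (ρ * (q * u ^ 2 + s ^ 2) -
      ((J + 1 + p) * q * u ^ 2 + 2 * q * u * s - (J - p) * s ^ 2)) =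
        (q * u - (ρ + J - p) * s) ^ 2 := by
    linear_combination (q * u ^ 2) * hprod
  rw [← sub_nonneg]
  exact nonneg_of_mul_nonneg_right (key ▸ sq_nonneg _) hgap

theorem mul_add_one_add_mul_topEigenvalue_le {J p : ℝ} (hJ : 0 < J) (hp : 0 ≤ p) :
    J * (J + 1) + (1 + 2 * p) * topEigenvalue J p ≤ (J + 1) ^ 2 * (1 + J⁻¹) ^ (2 * p) := by
  set y := 2 * (2 * p) / (2 * J + 1) with hy
  set B := 2 * J + 1 + 2 * (p + p ^ 2) / (2 * J + 1) with hB
  have hsqrt : √((2 * J + 1) ^ 2 + 4 * (p + p ^ 2)) ≤ B := by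
    convert sqrt_sq_add_le (x := 2 * J + 1) (d := 4 * (p + p ^ 2)) (by positivity) (by positivity)
      using 2
    field_simp
    ring
  have hexp : 1 + y + y ^ 2 / 2 + y ^ 3 / 6 ≤ (1 + J⁻¹) ^ (2 * p) :=
    (cubic_le_exp_of_nonneg (by positivity)).trans (exp_le_one_add_inv_rpow hJ (by positivity))
  -- the cubic Taylor term is needed: with `1 + y + y²/2` alone this fails for `p` near `1`
  have hpoly : J * (J + 1) + (1 + 2 * p) * (1 + 2 * p + B) / 2 ≤
      (J + 1) ^ 2 * (1 + y + y ^ 2 / 2 + y ^ 3 / 6) := by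
    rw [← sub_nonneg]
    have hid : (J + 1) ^ 2 * (1 + y + y ^ 2 / 2 + y ^ 3 / 6) -
        (J * (J + 1) + (1 + 2 * p) * (1 + 2 * p + B) / 2) =
          p ^ 2 * (24 * J ^ 2 + 48 * J + 18 + p * (16 * J ^ 2 + 80 * J + 52)) /
            (6 * (2 * J + 1) ^ 3) := by
      rw [hy, hB]
      field_simp
      ring
    rw [hid]
    positivity
  calc J * (J + 1) + (1 + 2 * p) * topEigenvalue J p
      ≤ J * (J + 1) + (1 + 2 * p) * (1 + 2 * p + B) / 2 := by unfold topEigenvalue; nlinarith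
    _ ≤ (J + 1) ^ 2 * (1 + y + y ^ 2 / 2 + y ^ 3 / 6) := hpoly
    _ ≤ (J + 1) ^ 2 * (1 + J⁻¹) ^ (2 * p) := by gcongr

theorem recursion_formula {J p Λ T μ : ℝ} (hJ : 0 < J) (hp : 0 ≤ p)
    (hμ : μ ^ 2 - 2 * (1 + p) * μ * Λ + (1 + 2 * p) * T ≤ 0) :
    (1 + p) * ((J * Λ + μ) / (J + 1)) ^ 2 - (J * T + μ ^ 2) / (J + 1) ≤
      (1 + J⁻¹) ^ (2 * p) * ((1 + p) * Λ ^ 2 - T) := by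
  set q := p + p ^ 2
  set s := μ - (1 + p) * Λ
  set F := (1 + p) * Λ ^ 2 - T
  set F' := (1 + p) * ((J * Λ + μ) / (J + 1)) ^ 2 - (J * T + μ ^ 2) / (J + 1)
  have hdisk : q * Λ ^ 2 + s ^ 2 ≤ (1 + 2 * p) * F := by linear_combination hμ
  have hF : 0 ≤ F := by nlinarith [sq_nonneg s, mul_nonneg (by positivity : 0 ≤ q) (sq_nonneg Λ)]
  have hid : (J + 1) ^ 2 * F' =
      J * (J + 1) * F + ((J + 1 + p) * q * Λ ^ 2 + 2 * q * Λ * s - (J - p) * s ^ 2) := by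
    simp only [F', F, s, q]
    field_simp
    ring
  have hρ : 0 ≤ topEigenvalue J p := by unfold topEigenvalue; positivity
  refine le_of_mul_le_mul_left ?_ (by positivity : (0 : ℝ) < (J + 1) ^ 2)
  calc (J + 1) ^ 2 * F'
      ≤ J * (J + 1) * F + topEigenvalue J p * (q * Λ ^ 2 + s ^ 2) := by
        rw [hid]; gcongr; exact quadForm_le_topEigenvalue_mul hJ.le hp Λ s
    _ ≤ J * (J + 1) * F + topEigenvalue J p * ((1 + 2 * p) * F) := by gcongr
    _ = (J * (J + 1) + (1 + 2 * p) * topEigenvalue J p) * F := by ring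
    _ ≤ (J + 1) ^ 2 * (1 + J⁻¹) ^ (2 * p) * F := by
        gcongr; exact mul_add_one_add_mul_topEigenvalue_le hJ hp
    _ = (J + 1) ^ 2 * ((1 + J⁻¹) ^ (2 * p) * F) := by ring

theorem mul_sq_le_of_quadratic {p Λ T μ : ℝ} (hp : 0 ≤ p)
    (hμ : μ ^ 2 - 2 * (1 + p) * μ * Λ + (1 + 2 * p) * T ≤ 0) :
    p * μ ^ 2 ≤ (1 + 2 * p) ^ 2 * ((1 + p) * Λ ^ 2 - T) := by
  nlinarith [mul_nonneg (by positivity : (0 : ℝ) ≤ 1 + p) (sq_nonneg (μ - (1 + p) * Λ - p * Λ))]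

/-- The mean `(μ 1 + ⋯ + μ j) / j` (`Λ_j` in Cheng–Yang's notation; `0` for `j = 0`). -/
noncomputable def avg (μ : ℕ → ℝ) (j : ℕ) : ℝ := (∑ i ∈ Icc 1 j, μ i) / j

/-- Cheng–Yang's `F_j = (1 + p) Λ_j² - T_j`, where `T_j` is the mean of the squares. -/
noncomputable def F (p : ℝ) (μ : ℕ → ℝ) (j : ℕ) : ℝ :=
  (1 + p) * avg μ j ^ 2 - avg (fun i => μ i ^ 2) j

/-- The hypothesis `hrec` at stage `j`, for `μ = λ + c_m` and `p = 1 / m`. -/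
def UniversalInequality (p : ℝ) (μ : ℕ → ℝ) (j : ℕ) : Prop :=
  ∑ i ∈ Icc 1 j, (μ (j + 1) - μ i) ^ 2 ≤ 2 * p * ∑ i ∈ Icc 1 j, (μ (j + 1) - μ i) * μ i

variable {p : ℝ} {μ : ℕ → ℝ}

theorem natCast_mul_avg (μ : ℕ → ℝ) (j : ℕ) : (j : ℝ) * avg μ j = ∑ i ∈ Icc 1 j, μ i := by
  rcases j.eq_zero_or_pos with rfl | hj
  · simp
  · exact mul_div_cancel₀ _ (by positivity)

theorem avg_one (μ : ℕ → ℝ) : avg μ 1 = μ 1 := by simp [avg]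

theorem avg_succ (μ : ℕ → ℝ) (j : ℕ) :
    avg μ (j + 1) = (j * avg μ j + μ (j + 1)) / (j + 1) := by
  rw [natCast_mul_avg, ← sum_Icc_succ_top (by omega), avg]
  push_cast
  rfl

theorem quadratic_of_universalInequality {j : ℕ} (hj : 1 ≤ j)
    (h : UniversalInequality p μ j) :
    μ (j + 1) ^ 2 - 2 * (1 + p) * μ (j + 1) * avg μ j + (1 + 2 * p) * avg (fun i => μ i ^ 2) j
      ≤ 0 := by
  have hsum : ∑ i ∈ Icc 1 j, (μ (j + 1) - μ i) ^ 2 -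
      2 * p * ∑ i ∈ Icc 1 j, (μ (j + 1) - μ i) * μ i =
        j * (μ (j + 1) ^ 2 - 2 * (1 + p) * μ (j + 1) * avg μ j +
          (1 + 2 * p) * avg (fun i => μ i ^ 2) j) := by
    calc _ = ∑ i ∈ Icc 1 j,
          (μ (j + 1) ^ 2 - 2 * (1 + p) * μ (j + 1) * μ i + (1 + 2 * p) * μ i ^ 2) := by
          rw [mul_sum, ← sum_sub_distrib]
          exact sum_congr rfl fun _ _ => by ring
      _ = _ := by
          rw [sum_add_distrib, sum_sub_distrib, sum_const, ← mul_sum, ← mul_sum,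
            ← natCast_mul_avg, ← natCast_mul_avg]
          simp only [Nat.card_Icc, add_tsub_cancel_right, nsmul_eq_mul]
          ring
  have hj' : (0 : ℝ) < j := by exact_mod_cast hj
  have := hsum ▸ sub_nonpos.2 h
  exact nonpos_of_mul_nonpos_right this hj'

theorem F_one (p : ℝ) (μ : ℕ → ℝ) : F p μ 1 = p * μ 1 ^ 2 := by
  simp only [F, avg_one]
  ring

theorem F_succ_le {j : ℕ} (hj : 1 ≤ j) (hp : 0 ≤ p) (h : UniversalInequality p μ j) :
    F p μ (j + 1) ≤ (1 + (j : ℝ)⁻¹) ^ (2 * p) * F p μ j := by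
  rw [F, F, avg_succ, avg_succ]
  exact recursion_formula (by exact_mod_cast hj) hp (quadratic_of_universalInequality hj h)

theorem F_le_rpow_mul {k : ℕ} (hk : 1 ≤ k) (hp : 0 ≤ p)
    (h : ∀ j, 1 ≤ j → UniversalInequality p μ j) :
    F p μ k ≤ (k : ℝ) ^ (2 * p) * (p * μ 1 ^ 2) := by
  induction k, hk using Nat.le_induction with
  | base => simp [F_one]
  | succ n hn ih =>
    have hn' : (0 : ℝ) < n := by exact_mod_cast hn
    calc F p μ (n + 1) ≤ (1 + (n : ℝ)⁻¹) ^ (2 * p) * F p μ n := F_succ_le hn hp (h n hn)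
      _ ≤ (1 + (n : ℝ)⁻¹) ^ (2 * p) * ((n : ℝ) ^ (2 * p) * (p * μ 1 ^ 2)) := by gcongr
      _ = ((n + 1 : ℕ) : ℝ) ^ (2 * p) * (p * μ 1 ^ 2) := by
        rw [← mul_assoc, ← mul_rpow (by positivity) hn'.le, add_mul, inv_mul_cancel₀ hn'.ne']
        push_cast
        ring_nf

theorem le_mul_rpow_mul_of_universalInequality {k : ℕ} (hk : 1 ≤ k) (hp : 0 < p)
    (hμ₁ : 0 ≤ μ 1) (h : ∀ j, 1 ≤ j → UniversalInequality p μ j) :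
    μ (k + 1) ≤ (1 + 2 * p) * (k : ℝ) ^ p * μ 1 := by
  have hsq : p * μ (k + 1) ^ 2 ≤ p * ((1 + 2 * p) * (k : ℝ) ^ p * μ 1) ^ 2 :=
    calc p * μ (k + 1) ^ 2 ≤ (1 + 2 * p) ^ 2 * F p μ k :=
          mul_sq_le_of_quadratic hp.le (quadratic_of_universalInequality hk (h k hk))
      _ ≤ (1 + 2 * p) ^ 2 * ((k : ℝ) ^ (2 * p) * (p * μ 1 ^ 2)) := by
          gcongr; exact F_le_rpow_mul hk hp.le h
      _ = p * ((1 + 2 * p) * (k : ℝ) ^ p * μ 1) ^ 2 := by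
          rw [mul_comm 2 p, rpow_mul (Nat.cast_nonneg k), rpow_two]
          ring
  exact (abs_le_of_sq_le_sq' (le_of_mul_le_mul_left hsq hp) (by positivity)).2

end ChengYang

theorem eigenvalue_bound_of_universal_inequality_general (m : ℕ) (hm : 0 < m)
    (lam : ℕ → ℝ)
    (hfirst : lam 1 = 0)
    (hrec : ∀ j, 1 ≤ j →
      ∑ i ∈ Finset.Icc 1 j, (lam (j + 1) - lam i) ^ 2 ≤
        (2 / (m : ℝ)) * ∑ i ∈ Finset.Icc 1 j,
          (lam (j + 1) - lam i) * (lam i + 2 * m * (m + 1))) :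
    ∀ k : ℕ, 1 ≤ k →
      lam (k + 1) ≤ 2 * ((m : ℝ) + 1) * ((m : ℝ) + 2) * (k : ℝ) ^ ((1 : ℝ) / m)
        - 2 * (m : ℝ) * ((m : ℝ) + 1) := by
  intro k hk
  have hm' : (0 : ℝ) < m := by exact_mod_cast hm
  set c : ℝ := 2 * m * (m + 1)
  have huniv (j : ℕ) (hj : 1 ≤ j) :
      ChengYang.UniversalInequality (1 / m) (fun i => lam i + c) j := by
    have h := hrec j hj
    simp only [ChengYang.UniversalInequality, add_sub_add_right_eq_sub]
    rwa [← div_eq_mul_one_div]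
  have hbound := ChengYang.le_mul_rpow_mul_of_universalInequality hk (by positivity)
    (by simp only [hfirst]; positivity) huniv
  have hconst : (1 + 2 * (1 / (m : ℝ))) * (k : ℝ) ^ ((1 : ℝ) / m) * c =
      2 * (m + 1) * (m + 2) * (k : ℝ) ^ ((1 : ℝ) / m) := by
    field_simp
    ring
  simp only [hfirst, zero_add] at hbound
  linarith

/-- Sequence-theoretic eigenvalue bound for complex submanifolds of `ℂPⁿ`:
if `(λ_i)_{i ≥ 1}` is a nondecreasing sequence of nonnegative reals with `λ₁ = 0`
satisfying, for every `j ≥ 1`, the El Soufi–Harrell–Ilias type inequality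
`∑_{i=1}^{j} (λ_{j+1} − λᵢ)² ≤ (2/m) ∑_{i=1}^{j} (λ_{j+1} − λᵢ)(λᵢ + c_m)` with
`c_m = 2m(m+1)`, then `λ_{k+1} ≤ 2(m+1)(m+2) k^{1/m} − 2m(m+1)` for every `k ≥ 1`. -/
theorem eigenvalue_bound_of_universal_inequality (m : ℕ) (hm : 0 < m)
    (lam : ℕ → ℝ)
    (hnonneg : ∀ i, 1 ≤ i → 0 ≤ lam i)
    (hmono : ∀ i j, 1 ≤ i → i ≤ j → lam i ≤ lam j)
    (hfirst : lam 1 = 0)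
    (hrec : ∀ j, 1 ≤ j →
      ∑ i ∈ Finset.Icc 1 j, (lam (j + 1) - lam i) ^ 2 ≤
        (2 / (m : ℝ)) * ∑ i ∈ Finset.Icc 1 j,
          (lam (j + 1) - lam i) * (lam i + 2 * m * (m + 1))) :
    ∀ k : ℕ, 1 ≤ k →
      lam (k + 1) ≤ 2 * ((m : ℝ) + 1) * ((m : ℝ) + 2) * (k : ℝ) ^ ((1 : ℝ) / m)
        - 2 * (m : ℝ) * ((m : ℝ) + 1) :=
  eigenvalue_bound_of_universal_inequality_general m hm lam hfirst hrec
end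

section
/- Let m be a positive integer and set c_m := 2m(m+1). Let (λ_i)_{i ≥ 1} be a nondecreasing sequence of nonnegative real numbers, and suppose that for every positive integer j one has ∑_{i=1}^{j} (λ_{j+1} − λᵢ)² ≤ (2/m) ∑_{i=1}^{j} (λ_{j+1} − λᵢ)(λᵢ + c_m). Then for every positive integer k, λ_{k+1} ≤ (1 + 2/m)(λ₁ + c_m) · k^{1/m} − c_m. -/
/-!
Put `μᵢ = λᵢ + c_m` and `e = 2/m`. The hypothesis says that `μ_{j+1}` lies where the quadratic
`j x² - (2 + e) (∑_{i ≤ j} μᵢ) x + (1 + e) ∑_{i ≤ j} μᵢ²` is nonpositive. Following Cheng–Yang,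
this makes `G_j / j^(2+e)` nonincreasing, where `G_j = (2 + e) (∑_{i ≤ j} μᵢ)² - 2 j ∑_{i ≤ j} μᵢ²`,
so `G_k ≤ G_1 k^(2+e) = e μ₁² k^(2+e)`; the same quadratic at `j = k` gives
`e k² μ_{k+1}² ≤ (1 + e)² G_k`, and taking square roots yields `μ_{k+1} ≤ (1 + e) μ₁ k^(e/2)`.

For `e ≤ 1` the monotonicity step combines a polynomial inequality carrying the factor
`(2K + 1 + e) / (2K + 1 - e)` with the Padé-type bound `(2K + 1 + e) / (2K + 1 - e) ≤ (1 + 1/K)^e`.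
For `e = 2` (`m = 1`) that bound fails, and a sharper polynomial inequality takes its place.
-/

open Finset Real

-- Compare the series `log (1 + y) - log (1 - y) = ∑ 2 y^(2k+1) / (2k+1)` termwise: `e^(2k+1) ≤ e`.
theorem log_one_add_mul_sub_log_one_sub_mul_le {x e : ℝ} (hx₀ : 0 ≤ x) (hx₁ : x < 1)
    (he₀ : 0 ≤ e) (he₁ : e ≤ 1) :
    log (1 + e * x) - log (1 - e * x) ≤ e * (log (1 + x) - log (1 - x)) := by
  have hex : |e * x| < 1 := by
    rw [abs_of_nonneg (by positivity)]
    nlinarith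
  refine hasSum_le (fun k ↦ ?_) (hasSum_log_sub_log_of_abs_lt_one hex)
    ((hasSum_log_sub_log_of_abs_lt_one (abs_lt.2 ⟨by linarith, hx₁⟩)).mul_left e)
  linear_combination (2 * (1 / (2 * (k : ℝ) + 1)) * x ^ (2 * k + 1)) *
    pow_le_of_le_one (n := 2 * k + 1) he₀ he₁ (by omega)

-- The previous lemma at `x = 1 / (2K + 1)`, for which `(1 + x) / (1 - x) = (K + 1) / K`.
theorem add_mul_rpow_le_sub_mul_add_one_rpow {K e : ℝ} (hK : 0 < K) (he₀ : 0 ≤ e) (he₁ : e ≤ 1) :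
    (2 * K + 1 + e) * K ^ e ≤ (2 * K + 1 - e) * (K + 1) ^ e := by
  have hN : 0 < 2 * K + 1 := by linarith
  have h := log_one_add_mul_sub_log_one_sub_mul_le (x := 1 / (2 * K + 1)) (by positivity)
    ((div_lt_one hN).2 (by linarith)) he₀ he₁
  rw [mul_one_div, one_add_div hN.ne', one_sub_div hN.ne', one_add_div hN.ne',
    one_sub_div hN.ne', log_div (by linarith) hN.ne', log_div (by linarith) hN.ne',
    log_div (by linarith) hN.ne', log_div (by linarith) hN.ne',
    show 2 * K + 1 + 1 = 2 * (K + 1) by ring, show 2 * K + 1 - 1 = 2 * K by ring,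
    log_mul two_ne_zero (by linarith), log_mul two_ne_zero hK.ne'] at h
  rw [← log_le_log_iff (by positivity) (mul_pos (by linarith) (by positivity)),
    log_mul (by linarith) (by positivity), log_mul (by linarith) (by positivity),
    log_rpow hK, log_rpow (by linarith)]
  linarith

section Step

variable {e K s t u : ℝ}

/- Both sides are linear in `t`, and `H` eliminates `t`; what remains is a positive semidefinite
quadratic form in `(s, K u)` (of determinant `(2 + e) e³ (K + 1)²` here), whose completed square
is the certificate. The same scheme proves `chengYang_step_two`. -/
theorem chengYang_step_rational (he : 0 ≤ e) (hK : 0 ≤ K)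
    (H : K * u ^ 2 - (2 + e) * s * u + (1 + e) * t ≤ 0) :
    (2 * K + 1 - e) * K ^ 2 * ((2 + e) * (s + u) ^ 2 - 2 * (K + 1) * (t + u ^ 2)) ≤
      (2 * K + 1 + e) * (K + 1) ^ 2 * ((2 + e) * s ^ 2 - 2 * K * t) := by
  set A := (2 + e) * ((2 * K + 1) ^ 2 + e * (2 * K ^ 2 + 2 * K + 1))
  have hA : 0 < A := by positivity
  refine sub_nonneg.1 (nonneg_of_mul_nonneg_right ?_ hA)
  nlinarith [mul_nonneg (mul_nonneg hA.le (by positivity : 0 ≤ 2 * K * (K + 1) * (2 * K + 1)))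
    (neg_nonneg.2 H), sq_nonneg (A * s - (2 + e) * ((2 * K + 1) ^ 2 - e * K) * (K * u)),
    (by positivity : 0 ≤ (2 + e) * e ^ 3 * (K + 1) ^ 2 * (K * u) ^ 2)]

theorem chengYang_step_two (hK : 0 ≤ K) (H : K * u ^ 2 - 4 * s * u + 3 * t ≤ 0) :
    K ^ 4 * (4 * (s + u) ^ 2 - 2 * (K + 1) * (t + u ^ 2)) ≤
      (K + 1) ^ 4 * (4 * s ^ 2 - 2 * K * t) := by
  set A := 4 * (4 * K ^ 3 + 6 * K ^ 2 + 4 * K + 1)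
  have hA : 0 < A := by positivity
  refine sub_nonneg.1 (nonneg_of_mul_nonneg_right ?_ hA)
  nlinarith [mul_nonneg
    (mul_nonneg hA.le (by positivity : 0 ≤ 2 * K * (K + 1) * (3 * K ^ 2 + 3 * K + 1) / 3))
    (neg_nonneg.2 H), sq_nonneg (A * s - 4 / 3 * K * (6 * K ^ 3 + 6 * K ^ 2 + 4 * K + 1) * u),
    (by positivity : 0 ≤ 8 / 9 * K ^ 2 * (6 * K ^ 4 + 18 * K ^ 3 + 19 * K ^ 2 + 8 * K + 1) * u ^ 2)]

theorem mul_sq_le_of_chengYang_quadratic (he : 0 ≤ e) (hK : 0 ≤ K)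
    (H : K * u ^ 2 - (2 + e) * s * u + (1 + e) * t ≤ 0) :
    e * K ^ 2 * u ^ 2 ≤ (1 + e) ^ 2 * ((2 + e) * s ^ 2 - 2 * K * t) := by
  nlinarith [mul_nonneg (by positivity : 0 ≤ 2 * K * (1 + e)) (neg_nonneg.2 H),
    (by positivity : 0 ≤ (2 + e) * (K * u - (1 + e) * s) ^ 2)]

theorem chengYang_step (he : 0 < e ∧ e ≤ 1 ∨ e = 2) (hK : 0 < K)
    (H : K * u ^ 2 - (2 + e) * s * u + (1 + e) * t ≤ 0) :
    K ^ (2 + e) * ((2 + e) * (s + u) ^ 2 - 2 * (K + 1) * (t + u ^ 2)) ≤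
      (K + 1) ^ (2 + e) * ((2 + e) * s ^ 2 - 2 * K * t) := by
  rcases he with ⟨he₀, he₁⟩ | rfl
  · have hG : 0 ≤ (2 + e) * s ^ 2 - 2 * K * t := by
      have h := mul_sq_le_of_chengYang_quadratic he₀.le hK.le H
      exact nonneg_of_mul_nonneg_right ((by positivity : 0 ≤ e * K ^ 2 * u ^ 2).trans h)
        (by positivity)
    have hrat := chengYang_step_rational he₀.le hK.le H
    have hpade := add_mul_rpow_le_sub_mul_add_one_rpow hK he₀.le he₁
    refine le_of_mul_le_mul_left ?_ (by linarith : 0 < 2 * K + 1 - e)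
    rw [rpow_add hK, rpow_add (by linarith), rpow_two, rpow_two]
    calc (2 * K + 1 - e) * (K ^ 2 * K ^ e * ((2 + e) * (s + u) ^ 2 - 2 * (K + 1) * (t + u ^ 2)))
        = K ^ e * ((2 * K + 1 - e) * K ^ 2 *
            ((2 + e) * (s + u) ^ 2 - 2 * (K + 1) * (t + u ^ 2))) := by ring
      _ ≤ K ^ e * ((2 * K + 1 + e) * (K + 1) ^ 2 * ((2 + e) * s ^ 2 - 2 * K * t)) := by gcongr
      _ = (2 * K + 1 + e) * K ^ e * ((K + 1) ^ 2 * ((2 + e) * s ^ 2 - 2 * K * t)) := by ring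
      _ ≤ (2 * K + 1 - e) * (K + 1) ^ e * ((K + 1) ^ 2 * ((2 + e) * s ^ 2 - 2 * K * t)) := by
        gcongr
      _ = (2 * K + 1 - e) * ((K + 1) ^ 2 * (K + 1) ^ e * ((2 + e) * s ^ 2 - 2 * K * t)) := by ring
  · rw [show (2 + 2 : ℝ) = (4 : ℕ) by norm_num, rpow_natCast, rpow_natCast]
    norm_num at H ⊢
    exact chengYang_step_two hK.le (by linarith)

end Step

section Sequence

variable (e : ℝ) (μ : ℕ → ℝ)

-- `2 j²` times Cheng–Yang's `F_j = (1 + e/2) Λ_j² - T_j` (`Λ_j`, `T_j`: means of `μᵢ`, `μᵢ²`).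
def chengYangFunctional (j : ℕ) : ℝ :=
  (2 + e) * (∑ i ∈ Icc 1 j, μ i) ^ 2 - 2 * j * ∑ i ∈ Icc 1 j, μ i ^ 2

theorem chengYangFunctional_one : chengYangFunctional e μ 1 = e * μ 1 ^ 2 := by
  simp only [chengYangFunctional, Icc_self, sum_singleton]
  push_cast
  ring

theorem chengYangFunctional_succ (j : ℕ) :
    chengYangFunctional e μ (j + 1) =
      (2 + e) * (∑ i ∈ Icc 1 j, μ i + μ (j + 1)) ^ 2 -
        2 * ((j : ℝ) + 1) * (∑ i ∈ Icc 1 j, μ i ^ 2 + μ (j + 1) ^ 2) := by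
  simp only [chengYangFunctional, sum_Icc_succ_top (Nat.le_add_left 1 j)]
  push_cast
  ring

variable {e μ}

theorem chengYang_quadratic_le_zero {j : ℕ}
    (h : ∑ i ∈ Icc 1 j, (μ (j + 1) - μ i) ^ 2 ≤ e * ∑ i ∈ Icc 1 j, (μ (j + 1) - μ i) * μ i) :
    j * μ (j + 1) ^ 2 - (2 + e) * (∑ i ∈ Icc 1 j, μ i) * μ (j + 1) +
      (1 + e) * ∑ i ∈ Icc 1 j, μ i ^ 2 ≤ 0 := by
  simp only [sub_sq, sub_mul, sum_add_distrib, sum_sub_distrib, sum_const, Nat.card_Icc,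
    add_tsub_cancel_right, nsmul_eq_mul, ← mul_sum, ← sq] at h
  linear_combination h

theorem chengYangFunctional_le (he : 0 < e ∧ e ≤ 1 ∨ e = 2)
    (hrec : ∀ j, 1 ≤ j →
      ∑ i ∈ Icc 1 j, (μ (j + 1) - μ i) ^ 2 ≤ e * ∑ i ∈ Icc 1 j, (μ (j + 1) - μ i) * μ i)
    {k : ℕ} (hk : 1 ≤ k) :
    chengYangFunctional e μ k ≤ e * μ 1 ^ 2 * (k : ℝ) ^ (2 + e) := by
  induction k, hk using Nat.le_induction with
  | base => simp [chengYangFunctional_one]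
  | succ n hn ih =>
    have hn₀ : (0 : ℝ) < n := by exact_mod_cast hn
    have hstep := chengYang_step he hn₀ (chengYang_quadratic_le_zero (hrec n hn))
    rw [← chengYangFunctional_succ] at hstep
    refine le_of_mul_le_mul_left ?_ (rpow_pos_of_pos hn₀ (2 + e))
    push_cast
    calc (n : ℝ) ^ (2 + e) * chengYangFunctional e μ (n + 1)
        ≤ ((n : ℝ) + 1) ^ (2 + e) * chengYangFunctional e μ n := hstep
      _ ≤ ((n : ℝ) + 1) ^ (2 + e) * (e * μ 1 ^ 2 * (n : ℝ) ^ (2 + e)) := by gcongr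
      _ = (n : ℝ) ^ (2 + e) * (e * μ 1 ^ 2 * ((n : ℝ) + 1) ^ (2 + e)) := by ring

theorem chengYang_bound (he : 0 < e ∧ e ≤ 1 ∨ e = 2) (hμ₁ : 0 ≤ μ 1)
    (hrec : ∀ j, 1 ≤ j →
      ∑ i ∈ Icc 1 j, (μ (j + 1) - μ i) ^ 2 ≤ e * ∑ i ∈ Icc 1 j, (μ (j + 1) - μ i) * μ i)
    {k : ℕ} (hk : 1 ≤ k) :
    μ (k + 1) ≤ (1 + e) * μ 1 * (k : ℝ) ^ (e / 2) := by
  have he₀ : 0 < e := by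
    rcases he with ⟨he₀, -⟩ | rfl
    exacts [he₀, two_pos]
  have hk₀ : (0 : ℝ) < k := by exact_mod_cast hk
  have hsq : e * k ^ 2 * μ (k + 1) ^ 2 ≤ e * k ^ 2 * ((1 + e) * μ 1 * (k : ℝ) ^ (e / 2)) ^ 2 := by
    calc e * k ^ 2 * μ (k + 1) ^ 2
        ≤ (1 + e) ^ 2 * chengYangFunctional e μ k :=
          mul_sq_le_of_chengYang_quadratic he₀.le hk₀.le (chengYang_quadratic_le_zero (hrec k hk))
      _ ≤ (1 + e) ^ 2 * (e * μ 1 ^ 2 * (k : ℝ) ^ (2 + e)) := by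
          gcongr
          exact chengYangFunctional_le he hrec hk
      _ = e * k ^ 2 * ((1 + e) * μ 1 * (k : ℝ) ^ (e / 2)) ^ 2 := by
          have hsqrt : ((k : ℝ) ^ (e / 2)) ^ 2 = (k : ℝ) ^ e := by
            rw [← rpow_natCast, ← rpow_mul hk₀.le]
            norm_num
          rw [rpow_add hk₀, rpow_two, mul_pow, mul_pow, hsqrt]
          ring
  exact (abs_le_of_sq_le_sq (le_of_mul_le_mul_left hsq (by positivity)) (by positivity)).trans'
    (le_abs_self _)

end Sequence

theorem eigenvalue_bound_shifted_chengYang_general (m : ℕ) (hm : 0 < m)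
    (lam : ℕ → ℝ)
    (hnonneg : ∀ i, 1 ≤ i → 0 ≤ lam i)
    (hrec : ∀ j, 1 ≤ j →
      ∑ i ∈ Finset.Icc 1 j, (lam (j + 1) - lam i) ^ 2 ≤
        (2 / (m : ℝ)) * ∑ i ∈ Finset.Icc 1 j,
          (lam (j + 1) - lam i) * (lam i + 2 * m * (m + 1))) :
    ∀ k : ℕ, 1 ≤ k →
      lam (k + 1) ≤ (1 + 2 / (m : ℝ)) * (lam 1 + 2 * m * (m + 1)) * (k : ℝ) ^ ((1 : ℝ) / m)
        - 2 * (m : ℝ) * ((m : ℝ) + 1) := by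
  intro k hk
  have he : 0 < 2 / (m : ℝ) ∧ 2 / (m : ℝ) ≤ 1 ∨ 2 / (m : ℝ) = 2 := by
    rcases Nat.lt_or_ge m 2 with hm₂ | hm₂
    · right
      simp [show m = 1 by omega]
    · left
      exact ⟨by positivity, (div_le_one (by positivity)).2 (by exact_mod_cast hm₂)⟩
  have h := chengYang_bound (μ := fun i ↦ lam i + 2 * m * (m + 1)) he
    (by have := hnonneg 1 le_rfl; positivity)
    (fun j hj ↦ by simpa only [add_sub_add_right_eq_sub] using hrec j hj) hk
  rw [div_div_cancel_left' (by positivity : (2 : ℝ) ≠ 0)] at h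
  rw [one_div]
  linarith

/-- Intermediate sequence-theoretic inequality: if `(λ_i)_{i ≥ 1}` is a nondecreasing
sequence of nonnegative reals satisfying, for every `j ≥ 1`,
`∑_{i=1}^{j} (λ_{j+1} − λᵢ)² ≤ (2/m) ∑_{i=1}^{j} (λ_{j+1} − λᵢ)(λᵢ + c_m)` with
`c_m = 2m(m+1)`, then `λ_{k+1} ≤ (1 + 2/m)(λ₁ + c_m) k^{1/m} − c_m` for every `k ≥ 1`. -/
theorem eigenvalue_bound_shifted_chengYang (m : ℕ) (hm : 0 < m)
    (lam : ℕ → ℝ)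
    (hnonneg : ∀ i, 1 ≤ i → 0 ≤ lam i)
    (hmono : ∀ i j, 1 ≤ i → i ≤ j → lam i ≤ lam j)
    (hrec : ∀ j, 1 ≤ j →
      ∑ i ∈ Finset.Icc 1 j, (lam (j + 1) - lam i) ^ 2 ≤
        (2 / (m : ℝ)) * ∑ i ∈ Finset.Icc 1 j,
          (lam (j + 1) - lam i) * (lam i + 2 * m * (m + 1))) :
    ∀ k : ℕ, 1 ≤ k →
      lam (k + 1) ≤ (1 + 2 / (m : ℝ)) * (lam 1 + 2 * m * (m + 1)) * (k : ℝ) ^ ((1 : ℝ) / m)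
        - 2 * (m : ℝ) * ((m : ℝ) + 1) :=
  eigenvalue_bound_shifted_chengYang_general m hm lam hnonneg hrec
end
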